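/- arXiv:2403.18854 — 3 statements merged into one kernel-verified Lean document; each statement's English description precedes it below -/
import Mathlib

section
/- The beam energy E(U) = (EA/2L)(v1⁺−v1⁻)² + (EI/2L)(θ⁺−θ⁻)² + (6EI/L)((v2⁺−v2⁻)/L − (θ⁻+θ⁺)/2)² on (v⁻,θ⁻,v⁺,θ⁺) ∈ ℝ²×ℝ×ℝ²×ℝ is a nonnegative quadratic form whose kernel is exactly the three-dimensional space of linearized rigid motions {(c + w x⁻, ω, c + w x⁺, ω) : c ∈ ℝ², ω ∈ ℝ}, where x⁻ = (0,0), x⁺ = (L,0), and w = ((0,−ω),(ω,0)). -/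
/-- Energy of a planar straight beam of length `L`, axial stiffness `EA`,
bending stiffness `EI`, with endpoint deflections `vm, vp : ℝ × ℝ` and
endpoint rotations `tm, tp : ℝ`. -/
noncomputable def beamE (EA EI L : ℝ) (vm : ℝ × ℝ) (tm : ℝ) (vp : ℝ × ℝ) (tp : ℝ) : ℝ :=
  EA / (2 * L) * (vp.1 - vm.1) ^ 2 + EI / (2 * L) * (tp - tm) ^ 2 +
    6 * EI / L * ((vp.2 - vm.2) / L - (tm + tp) / 2) ^ 2

/-- Action of the skew matrix `w = ((0,−ω),(ω,0))` on a point `x ∈ ℝ²`. -/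
def skewAct (ω : ℝ) (x : ℝ × ℝ) : ℝ × ℝ := (-ω * x.2, ω * x.1)

/-! The energy is a positive combination of the squares of three linear strains: the axial stretch
`v₁⁺ - v₁⁻`, the relative rotation `θ⁺ - θ⁻` and the chord-rotation mismatch
`(v₂⁺ - v₂⁻)/L - (θ⁻ + θ⁺)/2`. It vanishes exactly when all three do, and these three linear
conditions say `v⁺ = v⁻ + (0, θ L)` with `θ⁺ = θ⁻ = θ`, i.e. a linearized rigid motion. -/

section WeightedSquares

variable {K : Type*} [CommRing K] [LinearOrder K] [IsStrictOrderedRing K]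

theorem weighted_sq_sum_eq_zero_iff {a b c : K} (ha : 0 < a) (hb : 0 < b) (hc : 0 < c)
    (x y z : K) : a * x ^ 2 + b * y ^ 2 + c * z ^ 2 = 0 ↔ x = 0 ∧ y = 0 ∧ z = 0 := by
  have term_eq_zero_iff {d : K} (hd : 0 < d) (t : K) : d * t ^ 2 = 0 ↔ t = 0 := by
    simp [hd.ne']
  rw [add_eq_zero_iff_of_nonneg (by positivity) (by positivity),
    add_eq_zero_iff_of_nonneg (by positivity) (by positivity),
    term_eq_zero_iff ha, term_eq_zero_iff hb, term_eq_zero_iff hc, and_assoc]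

end WeightedSquares

theorem beamE_nonneg {EA EI L : ℝ} (hEA : 0 ≤ EA) (hEI : 0 ≤ EI) (hL : 0 ≤ L)
    (vm : ℝ × ℝ) (tm : ℝ) (vp : ℝ × ℝ) (tp : ℝ) : 0 ≤ beamE EA EI L vm tm vp tp := by
  unfold beamE
  positivity

theorem beamE_eq_zero_iff {EA EI L : ℝ} (hEA : 0 < EA) (hEI : 0 < EI) (hL : 0 < L)
    (vm : ℝ × ℝ) (tm : ℝ) (vp : ℝ × ℝ) (tp : ℝ) :
    beamE EA EI L vm tm vp tp = 0 ↔ vp.1 = vm.1 ∧ tp = tm ∧ vp.2 = vm.2 + tm * L := by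
  rw [beamE, weighted_sq_sum_eq_zero_iff (by positivity) (by positivity) (by positivity),
    sub_eq_zero, sub_eq_zero, sub_eq_zero, div_eq_iff hL.ne']
  constructor <;> rintro ⟨h₁, rfl, h₂⟩ <;> exact ⟨h₁, rfl, by linarith⟩

theorem exists_rigid_motion_iff (L : ℝ) (vm : ℝ × ℝ) (tm : ℝ) (vp : ℝ × ℝ) (tp : ℝ) :
    (∃ (c : ℝ × ℝ) (ω : ℝ),
        vm = c + skewAct ω (0, 0) ∧ tm = ω ∧ vp = c + skewAct ω (L, 0) ∧ tp = ω) ↔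
      vp.1 = vm.1 ∧ tp = tm ∧ vp.2 = vm.2 + tm * L := by
  constructor
  · rintro ⟨c, ω, rfl, rfl, rfl, rfl⟩
    simp [skewAct, mul_comm]
  · rintro ⟨h₁, rfl, h₂⟩
    refine ⟨vm, tp, by simp [skewAct], rfl, ?_, rfl⟩
    ext <;> simp [skewAct, h₁, h₂, mul_comm]

/-- The beam energy is a nonnegative quadratic form whose kernel is exactly
the three-dimensional space of linearized rigid motions
`(c + w x⁻, ω, c + w x⁺, ω)` with `x⁻ = (0,0)`, `x⁺ = (L,0)`. -/
theorem beamE_nonneg_and_kernel (EA EI L : ℝ) (hEA : 0 < EA) (hEI : 0 < EI) (hL : 0 < L)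
    (vm vp : ℝ × ℝ) (tm tp : ℝ) :
    0 ≤ beamE EA EI L vm tm vp tp ∧
      (beamE EA EI L vm tm vp tp = 0 ↔
        ∃ (c : ℝ × ℝ) (ω : ℝ),
          vm = c + skewAct ω (0, 0) ∧ tm = ω ∧ vp = c + skewAct ω (L, 0) ∧ tp = ω) :=
  ⟨beamE_nonneg hEA.le hEI.le hL.le vm tm vp tp,
    (beamE_eq_zero_iff hEA hEI hL vm tm vp tp).trans (exists_rigid_motion_iff L vm tm vp tp).symm⟩
end

section
/- For the two-bar one-dimensional chain with dynamical matrix D(k) as below, the scaled inverse satisfies: with L = (1/2, 1/2), the quantity (Lᵀ D_ε(k)^{-1} L)^{-1} converges as ε → 0 to D₀(k) = (L₁/(L₁+L₂)·1/(EA₁) + L₂/(L₁+L₂)·1/(EA₂))^{-1} k², for every k ≠ 0. In particular, the effective axial modulus is the harmonic (series) average of the two bar moduli weighted by length fractions. -/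
open Filter Topology Matrix

/-- Dynamical matrix of the two-bar one-dimensional chain. -/
noncomputable def Dtwo (EA1 EA2 L1 L2 k : ℝ) : Matrix (Fin 2) (Fin 2) ℂ :=
  ((EA1 / (L1 * (L1 + L2)) : ℝ) : ℂ) •
      !![1, -Complex.exp (-Complex.I * (k * L1));
         -Complex.exp (Complex.I * (k * L1)), 1] +
    ((EA2 / (L2 * (L1 + L2)) : ℝ) : ℂ) •
      !![1, -Complex.exp (Complex.I * (k * L2));
         -Complex.exp (-Complex.I * (k * L2)), 1]

/-- Scaled dynamical matrix `D_ε(k) = ε⁻² D(εk)`. -/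
noncomputable def DtwoEps (EA1 EA2 L1 L2 ε k : ℝ) : Matrix (Fin 2) (Fin 2) ℂ :=
  ((ε : ℂ) ^ 2)⁻¹ • Dtwo EA1 EA2 L1 L2 (ε * k)

lemma expI_add_expNegI (x : ℝ) :
    Complex.exp (Complex.I * x) + Complex.exp (-Complex.I * x) = 2 * (Real.cos x : ℂ) := by
  have h1 : Complex.I * (x:ℂ) = (x:ℂ) * Complex.I := mul_comm _ _
  have h2 : -Complex.I * (x:ℂ) = ((-x : ℝ):ℂ) * Complex.I := by push_cast; ring
  rw [h1, h2, Complex.exp_mul_I, Complex.exp_mul_I, Complex.ofReal_cos]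
  push_cast
  simp [Complex.cos_neg, Complex.sin_neg]
  ring

lemma dot_inv_formula (A : Matrix (Fin 2) (Fin 2) ℂ) :
    (![(1/2:ℂ),1/2] ⬝ᵥ (A⁻¹.mulVec ![(1/2:ℂ),1/2]))
    = (A.det)⁻¹ * ((A 1 1 + A 0 0 - A 0 1 - A 1 0)/4) := by
  rw [Matrix.inv_def, Matrix.adjugate_fin_two A, Ring.inverse_eq_inv']
  simp [Matrix.mulVec, dotProduct, Fin.sum_univ_two, Matrix.smul_apply]
  ring

lemma cross_product_expand (a b u v : ℝ) :
    (-((a:ℂ) * Complex.exp (-Complex.I * u)) - (b:ℂ) * Complex.exp (Complex.I * v)) *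
    (-((a:ℂ) * Complex.exp (Complex.I * u)) - (b:ℂ) * Complex.exp (-Complex.I * v))
    = (a:ℂ)^2 + (b:ℂ)^2 + (a:ℂ)*(b:ℂ)*(2 * (Real.cos (u+v) : ℂ)) := by
  have h1 : Complex.exp (-Complex.I * u) * Complex.exp (Complex.I * u) = 1 := by
    rw [← Complex.exp_add]
    norm_num
  have h2 : Complex.exp (Complex.I * v) * Complex.exp (-Complex.I * v) = 1 := by
    rw [← Complex.exp_add]
    norm_num
  have h3 : Complex.exp (-Complex.I * u) * Complex.exp (-Complex.I * v)
      = Complex.exp (-Complex.I * ((u+v : ℝ):ℂ)) := by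
    rw [← Complex.exp_add]
    push_cast
    ring_nf
  have h4 : Complex.exp (Complex.I * v) * Complex.exp (Complex.I * u)
      = Complex.exp (Complex.I * ((u+v : ℝ):ℂ)) := by
    rw [← Complex.exp_add]
    push_cast
    ring_nf
  have h5 := expI_add_expNegI (u+v)
  linear_combination ((a:ℂ)^2) * h1 + ((b:ℂ)^2) * h2 + ((a:ℂ)*(b:ℂ)) * h3
    + ((a:ℂ)*(b:ℂ)) * h4 + ((a:ℂ)*(b:ℂ)) * h5

lemma field_calc (c X d : ℂ) (hc : c ≠ 0) :
    ((c^2 * X)⁻¹ * (c * d / 4))⁻¹ = 4 * X * c * d⁻¹ := by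
  rcases eq_or_ne d 0 with h|h
  · simp [h]
  · rcases eq_or_ne X 0 with hX|hX
    · simp [hX]
    · field_simp

lemma one_sub_cos (x : ℝ) : 1 - Real.cos x = 2 * Real.sin (x/2)^2 := by
  have h := Real.sin_sq_add_cos_sq (x/2)
  have h2 := Real.cos_two_mul (x/2)
  have hx : 2 * (x/2) = x := by ring
  rw [hx] at h2
  nlinarith

lemma sinc_tendsto : Tendsto (fun t : ℝ => Real.sin t / t) (𝓝[≠] (0:ℝ)) (𝓝 1) := by
  have h := Real.hasDerivAt_sin 0
  rw [Real.cos_zero] at h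
  have h2 := hasDerivAt_iff_tendsto_slope.mp h
  refine h2.congr fun t => ?_
  simp [slope, Real.sin_zero, div_eq_inv_mul]

lemma one_sub_cos_div_sq_tendsto (m : ℝ) (hm : m ≠ 0) :
    Tendsto (fun ε : ℝ => (1 - Real.cos (ε * m)) / ε^2) (𝓝[>] 0) (𝓝 (m^2/2)) := by
  have hφ : Tendsto (fun ε : ℝ => ε * m / 2) (𝓝[>] 0) (𝓝[≠] (0:ℝ)) := by
    rw [tendsto_nhdsWithin_iff]
    constructor
    · have hc : Continuous (fun ε : ℝ => ε * m / 2) := by fun_prop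
      have := (hc.tendsto 0).mono_left (nhdsWithin_le_nhds (s := Set.Ioi (0:ℝ)))
      simpa using this
    · filter_upwards [self_mem_nhdsWithin] with ε (hε : ε ∈ Set.Ioi 0)
      have hε0 : ε ≠ 0 := ne_of_gt hε
      simp [div_eq_zero_iff, hε0, hm]
  have hs := sinc_tendsto.comp hφ
  have hsq : Tendsto (fun ε : ℝ => (Real.sin (ε*m/2) / (ε*m/2))^2) (𝓝[>] 0) (𝓝 1) := by
    have := hs.pow 2
    simpa [Function.comp] using this
  have h := hsq.const_mul (m^2/2)
  rw [mul_one] at h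
  refine h.congr' ?_
  filter_upwards [self_mem_nhdsWithin] with ε (hε : ε ∈ Set.Ioi 0)
  have hε0 : (ε:ℝ) ≠ 0 := ne_of_gt hε
  rw [one_sub_cos]
  field_simp

/-- With the localization vector `L = (1/2, 1/2)`, the quantity
`(Lᵀ D_ε(k)⁻¹ L)⁻¹` converges as `ε → 0⁺` to the effective modulus
`(L₁/(L₁+L₂)·(EA₁)⁻¹ + L₂/(L₁+L₂)·(EA₂)⁻¹)⁻¹ k²`: the harmonic (series)
average of the two bar moduli, weighted by length fractions. -/
theorem twoBar_effective_modulus (EA1 EA2 L1 L2 : ℝ)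
    (hEA1 : 0 < EA1) (hEA2 : 0 < EA2) (hL1 : 0 < L1) (hL2 : 0 < L2)
    (k : ℝ) (hk : k ≠ 0) :
    Tendsto
      (fun ε : ℝ =>
        ((![(1 / 2 : ℂ), 1 / 2]) ⬝ᵥ
            ((DtwoEps EA1 EA2 L1 L2 ε k)⁻¹.mulVec ![(1 / 2 : ℂ), 1 / 2]))⁻¹)
      (𝓝[>] 0)
      (𝓝 (((L1 / (L1 + L2) * (1 / EA1) + L2 / (L1 + L2) * (1 / EA2))⁻¹ * k ^ 2 : ℝ) : ℂ)) := by
  set a : ℝ := EA1 / (L1 * (L1 + L2)) with ha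
  set b : ℝ := EA2 / (L2 * (L1 + L2)) with hb
  have hL : 0 < L1 + L2 := by linarith
  have ha0 : 0 < a := by rw [ha]; positivity
  have hb0 : 0 < b := by rw [hb]; positivity
  set g : ℝ → ℝ := fun ε =>
    (8 * a * b) * ((1 - Real.cos (ε * (k * (L1+L2)))) / ε^2) *
      (2*(a+b) + 2*a*Real.cos (ε*k*L1) + 2*b*Real.cos (ε*k*L2))⁻¹ with hg
  -- Step 1: tendsto of g
  have hden : Tendsto (fun ε : ℝ =>
      (2*(a+b) + 2*a*Real.cos (ε*k*L1) + 2*b*Real.cos (ε*k*L2))) (𝓝[>] 0) (𝓝 (4*(a+b))) := by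
    have hc : Continuous (fun ε : ℝ =>
        (2*(a+b) + 2*a*Real.cos (ε*k*L1) + 2*b*Real.cos (ε*k*L2))) := by fun_prop
    have h := (hc.tendsto 0).mono_left (nhdsWithin_le_nhds (s := Set.Ioi (0:ℝ)))
    simp only [zero_mul, Real.cos_zero, mul_one] at h
    have h4 : 2*(a+b) + 2*a + 2*b = 4*(a+b) := by ring
    rwa [h4] at h
  have hm : k * (L1 + L2) ≠ 0 := by positivity
  have hnum := one_sub_cos_div_sq_tendsto (k*(L1+L2)) hm
  have hgt : Tendsto g (𝓝[>] 0)
      (𝓝 ((8*a*b) * ((k*(L1+L2))^2/2) * (4*(a+b))⁻¹)) := by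
    have hd4 : (4*(a+b)) ≠ 0 := by positivity
    exact ((hnum.const_mul (8*a*b)).mul (hden.inv₀ hd4))
  -- Step 2: identify the limit value
  have hval : (8*a*b) * ((k*(L1+L2))^2/2) * (4*(a+b))⁻¹
      = (L1 / (L1 + L2) * (1 / EA1) + L2 / (L1 + L2) * (1 / EA2))⁻¹ * k ^ 2 := by
    rw [ha, hb]
    have h1 : L1 ≠ 0 := ne_of_gt hL1
    have h2 : L2 ≠ 0 := ne_of_gt hL2
    have h3 : L1 + L2 ≠ 0 := ne_of_gt hL
    have h4 : EA1 ≠ 0 := ne_of_gt hEA1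
    have h5 : EA2 ≠ 0 := ne_of_gt hEA2
    have hsum : L1 / (L1 + L2) * (1 / EA1) + L2 / (L1 + L2) * (1 / EA2)
        = (L1 * EA2 + L2 * EA1) / ((L1+L2) * EA1 * EA2) := by field_simp
    rw [hsum]
    have h6 : L1 * EA2 + L2 * EA1 ≠ 0 := by positivity
    field_simp
    ring
  rw [hval] at hgt
  have hgc : Tendsto (fun ε : ℝ => ((g ε : ℝ) : ℂ)) (𝓝[>] 0)
      (𝓝 (((L1 / (L1 + L2) * (1 / EA1) + L2 / (L1 + L2) * (1 / EA2))⁻¹ * k ^ 2 : ℝ) : ℂ)) :=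
    (Complex.continuous_ofReal.tendsto _).comp hgt
  -- Step 3: eventual equality
  refine Tendsto.congr' ?_ hgc
  filter_upwards [self_mem_nhdsWithin] with ε (hε : ε ∈ Set.Ioi 0)
  have hε0 : (ε:ℝ) ≠ 0 := ne_of_gt hε
  have hε2 : ((ε:ℂ)^2) ≠ 0 := by
    simp [pow_eq_zero_iff, Complex.ofReal_eq_zero, hε0]
  set A := DtwoEps EA1 EA2 L1 L2 ε k with hA
  have e00 : A 0 0 = ((ε:ℂ)^2)⁻¹ * ((a:ℂ) + (b:ℂ)) := by
    simp [hA, DtwoEps, Dtwo, ← ha, ← hb]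
    try ring
  have e11 : A 1 1 = ((ε:ℂ)^2)⁻¹ * ((a:ℂ) + (b:ℂ)) := by
    simp [hA, DtwoEps, Dtwo, ← ha, ← hb]
    try ring
  have e01 : A 0 1 = ((ε:ℂ)^2)⁻¹ *
      (-((a:ℂ) * Complex.exp (-Complex.I * ((ε*k*L1 : ℝ):ℂ)))
        - (b:ℂ) * Complex.exp (Complex.I * ((ε*k*L2 : ℝ):ℂ))) := by
    simp [hA, DtwoEps, Dtwo, ← ha, ← hb]
    ring_nf
    try tauto
  have e10 : A 1 0 = ((ε:ℂ)^2)⁻¹ *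
      (-((a:ℂ) * Complex.exp (Complex.I * ((ε*k*L1 : ℝ):ℂ)))
        - (b:ℂ) * Complex.exp (-Complex.I * ((ε*k*L2 : ℝ):ℂ))) := by
    simp [hA, DtwoEps, Dtwo, ← ha, ← hb]
    ring_nf
    try tauto
  have hdet : A.det = (((ε:ℂ)^2)⁻¹)^2
      * ((2*a*b*(1 - Real.cos (ε*k*L1 + ε*k*L2)) : ℝ) : ℂ) := by
    rw [Matrix.det_fin_two, e00, e01, e10, e11]
    have hcross := cross_product_expand a b (ε*k*L1) (ε*k*L2)
    push_cast at hcross ⊢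
    linear_combination (-((((ε:ℂ)^2)⁻¹)^2)) * hcross
  have hS : A 1 1 + A 0 0 - A 0 1 - A 1 0 = ((ε:ℂ)^2)⁻¹ *
      ((2*(a+b) + 2*a*Real.cos (ε*k*L1) + 2*b*Real.cos (ε*k*L2) : ℝ) : ℂ) := by
    rw [e00, e01, e10, e11]
    have h1 := expI_add_expNegI (ε*k*L1)
    have h2 := expI_add_expNegI (ε*k*L2)
    push_cast at h1 h2 ⊢
    linear_combination ((ε:ℂ)^2)⁻¹ * (a:ℂ) * h1 + ((ε:ℂ)^2)⁻¹ * (b:ℂ) * h2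
  show ((g ε : ℝ) : ℂ) = _
  rw [dot_inv_formula, hdet, hS]
  have hc : (((ε:ℂ)^2)⁻¹) ≠ 0 := inv_ne_zero hε2
  rw [show ((((ε:ℂ)^2)⁻¹)^2
      * ((2*a*b*(1 - Real.cos (ε*k*L1 + ε*k*L2)) : ℝ) : ℂ))⁻¹
      * ((((ε:ℂ)^2)⁻¹ *
      ((2*(a+b) + 2*a*Real.cos (ε*k*L1) + 2*b*Real.cos (ε*k*L2) : ℝ) : ℂ))/4)
      = ((((ε:ℂ)^2)⁻¹^2
      * ((2*a*b*(1 - Real.cos (ε*k*L1 + ε*k*L2)) : ℝ) : ℂ))⁻¹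
      * ((((ε:ℂ)^2)⁻¹ *
      ((2*(a+b) + 2*a*Real.cos (ε*k*L1) + 2*b*Real.cos (ε*k*L2) : ℝ) : ℂ))/4)) from rfl]
  rw [field_calc _ _ _ hc]
  have harg : ε * (k * (L1+L2)) = ε*k*L1 + ε*k*L2 := by ring
  rw [show g ε = 8 * a * b * ((1 - Real.cos (ε * (k * (L1+L2)))) / ε^2) *
      (2*(a+b) + 2*a*Real.cos (ε*k*L1) + 2*b*Real.cos (ε*k*L2))⁻¹ from rfl, harg]
  push_cast
  ring
end

section
/- The two-bar chain dynamical matrix D(k) is Hermitian positive semidefinite for every k, and it is positive definite whenever e^{ik(L₁+L₂)} ≠ 1; its kernel for k with e^{ik(L₁+L₂)} = 1 is one-dimensional, spanned by (1, e^{ikL₁}). -/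
/-!
Write `e₁ = e^{ikL₁}` and `e₂ = e^{ikL₂}`. Since `|e₁| = |e₂| = 1`, each bar contributes a
positive multiple of `w wᴴ`, with `w = (1, -e₁)` and `w = (1, -ē₂)` respectively. Hence `D(k)` is
positive semidefinite and `D(k) x = 0` iff `x` is orthogonal to both vectors. These vectors are
independent unless `e₁ = ē₂`, i.e. `e^{ik(L₁+L₂)} = 1`; in that case the kernel is the orthogonal
complement of `(1, -e₁)`, which is spanned by `(1, e₁)`.
-/

open Matrix
open scoped ComplexOrder

namespace Matrix

section RCLike

variable {𝕜 n : Type*} [RCLike 𝕜] [Fintype n]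

theorem PosSemidef.add_mulVec_eq_zero_iff {A B : Matrix n n 𝕜} (hA : A.PosSemidef)
    (hB : B.PosSemidef) (x : n → 𝕜) :
    (A + B) *ᵥ x = 0 ↔ A *ᵥ x = 0 ∧ B *ᵥ x = 0 := by
  rw [← (hA.add hB).dotProduct_mulVec_zero_iff, ← hA.dotProduct_mulVec_zero_iff,
    ← hB.dotProduct_mulVec_zero_iff, add_mulVec, dotProduct_add]
  exact add_eq_zero_iff_of_nonneg (hA.dotProduct_mulVec_nonneg x)
    (hB.dotProduct_mulVec_nonneg x)

theorem PosSemidef.posDef_of_mulVec_eq_zero {A : Matrix n n 𝕜} (hA : A.PosSemidef)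
    (h : ∀ x, A *ᵥ x = 0 → x = 0) : A.PosDef :=
  posDef_iff_dotProduct_mulVec.mpr ⟨hA.isHermitian, fun x hx =>
    (hA.dotProduct_mulVec_nonneg x).lt_of_ne' fun h0 =>
      hx (h x ((hA.dotProduct_mulVec_zero_iff x).mp h0))⟩

theorem posSemidef_smul_vecMulVec_self_star {a : 𝕜} (ha : 0 ≤ a) (u : n → 𝕜) :
    (a • vecMulVec u (star u)).PosSemidef :=
  (posSemidef_vecMulVec_self_star u).smul ha

theorem smul_vecMulVec_mulVec_eq_zero_iff {a : 𝕜} (ha : a ≠ 0) {u : n → 𝕜} (hu : u ≠ 0)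
    (x : n → 𝕜) : (a • vecMulVec u (star u)) *ᵥ x = 0 ↔ star u ⬝ᵥ x = 0 := by
  rw [smul_mulVec, vecMulVec_mulVec, op_smul_eq_smul, smul_smul, smul_eq_zero, mul_eq_zero]
  tauto

theorem smul_vecMulVec_add_smul_vecMulVec_mulVec_eq_zero_iff {a b : 𝕜} (ha : 0 < a)
    (hb : 0 < b) {u v : n → 𝕜} (hu : u ≠ 0) (hv : v ≠ 0) (x : n → 𝕜) :
    (a • vecMulVec u (star u) + b • vecMulVec v (star v)) *ᵥ x = 0 ↔
      star u ⬝ᵥ x = 0 ∧ star v ⬝ᵥ x = 0 := by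
  rw [(posSemidef_smul_vecMulVec_self_star ha.le u).add_mulVec_eq_zero_iff
      (posSemidef_smul_vecMulVec_self_star hb.le v),
    smul_vecMulVec_mulVec_eq_zero_iff ha.ne' hu, smul_vecMulVec_mulVec_eq_zero_iff hb.ne' hv]

end RCLike

theorem vecCons_one_ne_zero {R : Type*} [Zero R] [One R] [NeZero (1 : R)] {n : ℕ}
    (v : Fin n → R) : vecCons 1 v ≠ 0 :=
  fun h => one_ne_zero (congrFun h 0)

section UnitVector

variable {R : Type*} [CommRing R] [StarRing R] {z : R}

theorem vecMulVec_one_neg (hz : star z * z = 1) :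
    vecMulVec ![1, -z] (star ![1, -z]) = !![1, -star z; -z, 1] := by
  ext i j
  fin_cases i <;> fin_cases j <;> simp [vecMulVec_apply, mul_comm z, hz]

theorem star_one_neg_dotProduct (z : R) (x : Fin 2 → R) :
    star ![1, -z] ⬝ᵥ x = x 0 - star z * x 1 := by
  simp [dotProduct, Fin.sum_univ_two, sub_eq_add_neg]

theorem star_one_neg_dotProduct_eq_zero_iff (hz : star z * z = 1) (x : Fin 2 → R) :
    star ![1, -z] ⬝ᵥ x = 0 ↔ ∃ c : R, x = c • ![1, z] := by
  rw [star_one_neg_dotProduct]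
  constructor
  · intro h
    refine ⟨x 0, funext fun i => ?_⟩
    fin_cases i
    · simp
    · simp only [Fin.mk_one, Pi.smul_apply, cons_val_one, cons_val_fin_one, smul_eq_mul]
      linear_combination -z * h - x 1 * hz
  · rintro ⟨c, rfl⟩
    simp only [Pi.smul_apply, cons_val_zero, cons_val_one, cons_val_fin_one, smul_eq_mul,
      mul_one]
    linear_combination -c * hz

theorem eq_zero_of_star_one_neg_dotProduct_eq_zero [IsDomain R] {w : R} (hzw : z ≠ w)
    {x : Fin 2 → R} (hz : star ![1, -z] ⬝ᵥ x = 0) (hw : star ![1, -w] ⬝ᵥ x = 0) : x = 0 := by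
  rw [star_one_neg_dotProduct] at hz hw
  have hx₁ : x 1 = 0 := by
    have : (star w - star z) * x 1 = 0 := by linear_combination hz - hw
    exact (mul_eq_zero.mp this).resolve_left (sub_ne_zero.mpr (star_injective.ne hzw.symm))
  funext i
  fin_cases i
  · simpa [hx₁] using hz
  · exact hx₁

end UnitVector

end Matrix

open Complex in
theorem star_cexp_I_mul (s t : ℝ) : star (exp (I * (s * t))) = exp (-I * (s * t)) := by
  rw [star_def, ← exp_conj]
  simp

theorem star_cexp_I_mul_mul_self (s t : ℝ) :
    star (Complex.exp (Complex.I * (s * t))) * Complex.exp (Complex.I * (s * t)) = 1 := by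
  rw [star_cexp_I_mul, ← Complex.exp_add]
  simp

theorem Dtwo_eq_smul_vecMulVec_add_smul_vecMulVec (EA1 EA2 L1 L2 k : ℝ) :
    Dtwo EA1 EA2 L1 L2 k =
      ((EA1 / (L1 * (L1 + L2)) : ℝ) : ℂ) •
          vecMulVec ![1, -Complex.exp (Complex.I * (k * L1))]
            (star ![1, -Complex.exp (Complex.I * (k * L1))]) +
        ((EA2 / (L2 * (L1 + L2)) : ℝ) : ℂ) •
          vecMulVec ![1, -star (Complex.exp (Complex.I * (k * L2)))]
            (star ![1, -star (Complex.exp (Complex.I * (k * L2)))]) := by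
  have h₂ : star (star (Complex.exp (Complex.I * (k * L2)))) *
      star (Complex.exp (Complex.I * (k * L2))) = 1 := by
    rw [star_star, mul_comm, star_cexp_I_mul_mul_self]
  rw [vecMulVec_one_neg (star_cexp_I_mul_mul_self k L1), vecMulVec_one_neg h₂, star_star,
    star_cexp_I_mul, star_cexp_I_mul]
  rfl

/-- `D(k)` is Hermitian positive semidefinite for every `k`; it is positive
definite whenever `e^{ik(L₁+L₂)} ≠ 1`; and when `e^{ik(L₁+L₂)} = 1` its kernel
is one-dimensional, spanned by `(1, e^{ikL₁})`. -/
theorem Dtwo_posSemidef_posDef_kernel (EA1 EA2 L1 L2 : ℝ)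
    (hEA1 : 0 < EA1) (hEA2 : 0 < EA2) (hL1 : 0 < L1) (hL2 : 0 < L2) (k : ℝ) :
    (Dtwo EA1 EA2 L1 L2 k).PosSemidef ∧
      (Complex.exp (Complex.I * (k * (L1 + L2))) ≠ 1 → (Dtwo EA1 EA2 L1 L2 k).PosDef) ∧
      (Complex.exp (Complex.I * (k * (L1 + L2))) = 1 →
        ∀ v : Fin 2 → ℂ,
          (Dtwo EA1 EA2 L1 L2 k).mulVec v = 0 ↔
            ∃ c : ℂ, v = c • ![1, Complex.exp (Complex.I * (k * L1))]) := by
  set e₁ := Complex.exp (Complex.I * (k * L1))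
  set e₂ := Complex.exp (Complex.I * (k * L2))
  have he₁ : star e₁ * e₁ = 1 := star_cexp_I_mul_mul_self k L1
  have he₂ : star e₂ * e₂ = 1 := star_cexp_I_mul_mul_self k L2
  have hexp : Complex.exp (Complex.I * (k * (L1 + L2))) = e₁ * e₂ := by
    rw [← Complex.exp_add]; congr 1; ring
  have ha : (0 : ℂ) < ((EA1 / (L1 * (L1 + L2)) : ℝ) : ℂ) :=
    Complex.zero_lt_real.mpr (by positivity)
  have hb : (0 : ℂ) < ((EA2 / (L2 * (L1 + L2)) : ℝ) : ℂ) :=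
    Complex.zero_lt_real.mpr (by positivity)
  have hD := Dtwo_eq_smul_vecMulVec_add_smul_vecMulVec EA1 EA2 L1 L2 k
  have hpsd : (Dtwo EA1 EA2 L1 L2 k).PosSemidef := hD ▸
    (posSemidef_smul_vecMulVec_self_star ha.le _).add (posSemidef_smul_vecMulVec_self_star hb.le _)
  have hker := smul_vecMulVec_add_smul_vecMulVec_mulVec_eq_zero_iff ha hb
    (vecCons_one_ne_zero ![-e₁]) (vecCons_one_ne_zero ![-star e₂])
  refine ⟨hpsd, fun hne => hpsd.posDef_of_mulVec_eq_zero fun x hx => ?_, fun heq x => ?_⟩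
  · rw [hD, hker] at hx
    exact eq_zero_of_star_one_neg_dotProduct_eq_zero (fun h => hne (by rw [hexp, h, he₂]))
      hx.1 hx.2
  · have hconj : star e₂ = e₁ := by
      rw [hexp] at heq
      linear_combination (-star e₂) * heq + e₁ * he₂
    rw [hD, hker, hconj, and_self, star_one_neg_dotProduct_eq_zero_iff he₁]
end
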